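/- arXiv:1604.05755 — 2 statements merged into one kernel-verified Lean document; each statement's English description precedes it below -/
import Mathlib

section
/- There exists a family of non-negative integers a[(j,g),(k,h);(m,r)], defined for all j,k,m ∈ ℕ and g ∈ S_j, h ∈ S_k, r ∈ S_m, which depends only on the conjugacy class of g under S_j, of h under S_k and of r under S_m, such that: (i) for each fixed (j,g) and (k,h), the constants are nonzero for only finitely many pairs (m, class of r); and (ii) for every N ∈ ℕ one has A_N[j,g] * A_N[k,h] = Σ a[(j,g),(k,h);(m,r)] · A_N[m,r] in ℂ[S_∞], the sum running over all m ∈ ℕ and one representative r of each conjugacy class of S_m. -/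
noncomputable section

/-- `S_j`: permutations of `ℕ` fixing every `m ≥ j`. -/
def Sset (j : ℕ) : Set (Equiv.Perm ℕ) := {g | ∀ m : ℕ, j ≤ m → g m = m}

/-- Conjugacy (under `S_j`) of elements of `S_j`. -/
def conjRel (j : ℕ) (a b : {g : Equiv.Perm ℕ // g ∈ Sset j}) : Prop :=
  ∃ τ : Equiv.Perm ℕ, (∀ m : ℕ, j ≤ m → τ m = m) ∧ (b : Equiv.Perm ℕ) = τ * (a : Equiv.Perm ℕ) * τ⁻¹

/-- The set of pairs `(m, conjugacy class of S_m)`. -/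
def Cls : Type := Σ j : ℕ, Quot (conjRel j)

/-- The class of `g ∈ S_j`. -/
def clsOf (j : ℕ) (g : Equiv.Perm ℕ) (hg : g ∈ Sset j) : Cls := ⟨j, Quot.mk _ ⟨g, hg⟩⟩

/-- A representative of a class. -/
def rep (z : Cls) : Equiv.Perm ℕ := (Quot.out z.2 : {g : Equiv.Perm ℕ // g ∈ Sset z.1}).val

/-- Extension of a permutation of `Fin N` to a permutation of `ℕ`; these
extensions form exactly the subgroup `S_N` of `S_∞`. -/
def extN (N : ℕ) (σ : Equiv.Perm (Fin N)) : Equiv.Perm ℕ := σ.extendDomain Fin.equivSubtype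

/-- `A_N[j,g] = (1/(N−j)!) Σ_{τ ∈ S_N} τ g τ⁻¹ ∈ ℂ[S_∞]`, and `A_N[j,g] = 0` for `j > N`. -/
def AN (N j : ℕ) (g : Equiv.Perm ℕ) : MonoidAlgebra ℂ (Equiv.Perm ℕ) :=
  if j ≤ N then
    ((Nat.factorial (N - j) : ℂ))⁻¹ •
      ∑ σ : Equiv.Perm (Fin N),
        MonoidAlgebra.of ℂ (Equiv.Perm ℕ) (extN N σ * g * (extN N σ)⁻¹)
  else 0

/-! ### Basic lemmas on `extN` -/

open Equiv Finset

theorem extN_apply_lt (N : ℕ) (σ : Equiv.Perm (Fin N)) (x : ℕ) (h : x < N) :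
    extN N σ x = σ ⟨x, h⟩ := by
  have := Equiv.Perm.extendDomain_apply_subtype σ Fin.equivSubtype (b := x) h
  simpa [extN, Fin.equivSubtype] using this

theorem extN_apply_ge (N : ℕ) (σ : Equiv.Perm (Fin N)) (x : ℕ) (h : N ≤ x) :
    extN N σ x = x :=
  Equiv.Perm.extendDomain_apply_not_subtype σ Fin.equivSubtype (by omega)

theorem extN_mul (N : ℕ) (σ τ : Equiv.Perm (Fin N)) :
    extN N (σ * τ) = extN N σ * extN N τ :=
  (Equiv.Perm.extendDomain_mul _ _ _).symm

theorem extN_lt (N : ℕ) (σ : Equiv.Perm (Fin N)) (x : ℕ) (h : x < N) :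
    extN N σ x < N := by
  rw [extN_apply_lt N σ x h]; exact (σ ⟨x, h⟩).2

/-- A permutation of `ℕ` fixing everything `≥ N` comes from `Perm (Fin N)`. -/
theorem exists_extN_eq (N : ℕ) (τ : Equiv.Perm ℕ) (hτ : ∀ x, N ≤ x → τ x = x) :
    ∃ σ : Equiv.Perm (Fin N), extN N σ = τ := by
  have hlt : ∀ x : ℕ, x < N → τ x < N := by
    intro x hx
    by_contra hge
    have : τ (τ x) = τ x := hτ _ (by omega)
    have := τ.injective this
    omega
  have hlt' : ∀ x : ℕ, x < N → τ.symm x < N := by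
    intro x hx
    by_contra hge
    have : τ (τ.symm x) = τ.symm x := hτ _ (by omega)
    rw [Equiv.apply_symm_apply] at this
    omega
  refine ⟨⟨fun i => ⟨τ i, hlt i.1 i.2⟩, fun i => ⟨τ.symm i, hlt' i.1 i.2⟩, ?_, ?_⟩, ?_⟩
  · intro i; ext; simp
  · intro i; ext; simp
  · ext x
    rcases lt_or_ge x N with h | h
    · rw [extN_apply_lt N _ x h]; rfl
    · rw [extN_apply_ge N _ x h, hτ x h]

/-- Conjugation of `h ∈ Sset k` only depends on the values of the conjugator below `k`. -/
theorem conj_eq_of_agree {k : ℕ} {h : Equiv.Perm ℕ} (hh : h ∈ Sset k)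
    (X Y : Equiv.Perm ℕ) (hXY : ∀ i, i < k → X i = Y i) :
    X * h * X⁻¹ = Y * h * Y⁻¹ := by
  have key : ∀ x, (Y⁻¹ * X) x = x → True := fun _ _ => trivial
  set W : Equiv.Perm ℕ := Y⁻¹ * X with hW
  have hWfix : ∀ i, i < k → W i = i := by
    intro i hi
    have : X i = Y i := hXY i hi
    simp [hW, Equiv.Perm.mul_apply, this]
  have hmaps : ∀ y, k ≤ y → h y = y := fun y hy => hh y hy
  have hker : W * h * W⁻¹ = h := by
    ext x
    rcases lt_or_ge ((W⁻¹ : Equiv.Perm ℕ) x) k with hy | hy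
    · have hx : x < k := by
        have := hWfix _ hy
        have hx' : W ((W⁻¹ : Equiv.Perm ℕ) x) = x := by simp
        rw [this] at hx'; rw [hx']  at hy; exact hy
      have hWx : (W⁻¹ : Equiv.Perm ℕ) x = x := by
        have := hWfix x hx
        have : W x = x := this
        calc (W⁻¹ : Equiv.Perm ℕ) x = W⁻¹ (W x) := by rw [this]
        _ = x := by simp
      have hhx : h x < k := by
        by_contra hge
        have : h (h x) = h x := hmaps _ (by omega)
        have := h.injective this
        omega
      simp [Equiv.Perm.mul_apply, hWx, hWfix _ hhx]
    · have hhy : h ((W⁻¹ : Equiv.Perm ℕ) x) = (W⁻¹ : Equiv.Perm ℕ) x := hmaps _ hy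
      have hx : k ≤ x := by
        by_contra hlt
        push_neg at hlt
        have : W x = x := hWfix x hlt
        have : (W⁻¹ : Equiv.Perm ℕ) x = x := by
          calc (W⁻¹ : Equiv.Perm ℕ) x = W⁻¹ (W x) := by rw [this]
          _ = x := by simp
        omega
      rw [Equiv.Perm.mul_apply, Equiv.Perm.mul_apply, hhy, hmaps x hx]; simp
  calc X * h * X⁻¹ = Y * (W * h * W⁻¹) * Y⁻¹ := by
        rw [hW]; group
  _ = Y * h * Y⁻¹ := by rw [hker]
/-! ### Extending an injection to a permutation -/

theorem exists_perm_extend {k M : ℕ} (v : Fin k → ℕ) (hinj : Function.Injective v)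
    (hbd : ∀ i, v i < M) :
    ∃ Q : Equiv.Perm ℕ, (∀ i : Fin k, Q i = v i) ∧ (∀ x, M ≤ x → Q x = x) := by
  have hkM : k ≤ M := by
    have : Function.Injective (fun i : Fin k => (⟨v i, hbd i⟩ : Fin M)) := by
      intro a b hab
      exact hinj (by simpa using congrArg Fin.val hab)
    simpa using Fintype.card_le_of_injective _ this
  classical
  set s : Finset (Fin M) := Finset.univ.filter (fun x : Fin M => (x : ℕ) < k) with hs
  set f : Fin M → Fin M := fun x => if h : (x : ℕ) < k then ⟨v ⟨x, h⟩, hbd _⟩ else x with hf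
  have hαt : Fintype.card (Fin M) = (Finset.univ : Finset (Fin M)).card := by simp
  have hfst : s.image f ⊆ Finset.univ := Finset.subset_univ _
  have hfs : Set.InjOn f s := by
    intro a ha b hb hab
    simp only [hs, Finset.coe_filter, Set.mem_setOf_eq, Finset.mem_univ, true_and] at ha hb
    simp only [hf, dif_pos ha, dif_pos hb] at hab
    have : v ⟨a, ha⟩ = v ⟨b, hb⟩ := by simpa using congrArg Fin.val hab
    exact Fin.ext (by simpa using congrArg Fin.val (hinj this))
  obtain ⟨g, hg⟩ := Finset.exists_equiv_extend_of_card_eq hαt hfst hfs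
  set σ : Equiv.Perm (Fin M) := g.trans (Equiv.subtypeUnivEquiv (fun x => Finset.mem_univ x))
  have hσ : ∀ i : Fin k, σ ⟨(i : ℕ), lt_of_lt_of_le i.2 hkM⟩ = ⟨v i, hbd i⟩ := by
    intro i
    have hmem : (⟨(i : ℕ), lt_of_lt_of_le i.2 hkM⟩ : Fin M) ∈ s := by
      simp [hs, i.2]
    have := hg _ hmem
    have h2 : f ⟨(i : ℕ), lt_of_lt_of_le i.2 hkM⟩ = ⟨v i, hbd i⟩ := by
      simp [hf, i.2]
    apply Fin.ext
    simpa [σ, Equiv.subtypeUnivEquiv, h2] using congrArg Fin.val this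
  refine ⟨extN M σ, ?_, ?_⟩
  · intro i
    rw [extN_apply_lt M σ i (lt_of_lt_of_le i.2 hkM), hσ i]
  · intro x hx
    exact extN_apply_ge M σ x hx

/-! ### `SumC` and basic `AN` lemmas -/

def SumC (N : ℕ) (r : Equiv.Perm ℕ) : MonoidAlgebra ℂ (Equiv.Perm ℕ) :=
  ∑ σ : Equiv.Perm (Fin N), MonoidAlgebra.of ℂ (Equiv.Perm ℕ) (extN N σ * r * (extN N σ)⁻¹)

theorem AN_eq_smul_SumC (N j : ℕ) (g : Equiv.Perm ℕ) (h : j ≤ N) :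
    AN N j g = ((Nat.factorial (N - j) : ℂ))⁻¹ • SumC N g := by
  rw [AN, if_pos h]; rfl

theorem extN_inv (N : ℕ) (δ : Equiv.Perm (Fin N)) : extN N δ⁻¹ = (extN N δ)⁻¹ := by
  have := extN_mul N δ δ⁻¹
  simp only [mul_inv_cancel] at this
  have h1 : extN N 1 = 1 := by
    ext x
    rcases lt_or_ge x N with h | h
    · rw [extN_apply_lt N 1 x h]; rfl
    · rw [extN_apply_ge N 1 x h]; rfl
  rw [h1] at this
  exact (eq_inv_of_mul_eq_one_right this.symm).symm

theorem SumC_conj (N : ℕ) (r : Equiv.Perm ℕ) (δ : Equiv.Perm (Fin N)) :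
    SumC N (extN N δ * r * (extN N δ)⁻¹) = SumC N r := by
  rw [SumC, SumC]
  rw [← Equiv.sum_comp (Equiv.mulRight δ)
    (fun σ => MonoidAlgebra.of ℂ (Equiv.Perm ℕ) (extN N σ * r * (extN N σ)⁻¹))]
  apply Finset.sum_congr rfl
  intro σ _
  congr 1
  simp only [Equiv.coe_mulRight, extN_mul, mul_inv_rev]
  group

theorem AN_conj (N m : ℕ) (r : Equiv.Perm ℕ) (τ : Equiv.Perm ℕ) (hτ : ∀ x, m ≤ x → τ x = x) :
    AN N m (τ * r * τ⁻¹) = AN N m r := by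
  rcases le_or_gt m N with h | h
  · have hτ' : ∀ x, N ≤ x → τ x = x := fun x hx => hτ x (le_trans h hx)
    obtain ⟨δ, hδ⟩ := exists_extN_eq N τ hτ'
    rw [AN_eq_smul_SumC _ _ _ h, AN_eq_smul_SumC _ _ _ h, ← hδ, SumC_conj]
  · rw [AN, if_neg (by omega), AN, if_neg (by omega)]

/-- `AN` only depends on the conjugacy class. -/
theorem AN_eq_of_conjRel (N j : ℕ) (a b : {g : Equiv.Perm ℕ // g ∈ Sset j})
    (hab : conjRel j a b) : AN N j (a : Equiv.Perm ℕ) = AN N j (b : Equiv.Perm ℕ) := by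
  obtain ⟨τ, hτ, hb⟩ := hab
  rw [hb, AN_conj N j _ τ hτ]

theorem conjRel_equivalence (j : ℕ) : Equivalence (conjRel j) := by
  constructor
  · intro a; exact ⟨1, fun m _ => rfl, by group⟩
  · rintro a b ⟨τ, hτ, hb⟩
    refine ⟨τ⁻¹, fun m hm => ?_, by rw [hb]; group⟩
    have := hτ m hm
    calc (τ⁻¹ : Equiv.Perm ℕ) m = τ⁻¹ (τ m) := by rw [this]
    _ = m := by simp
  · rintro a b c ⟨τ, hτ, hb⟩ ⟨ρ, hρ, hc⟩
    refine ⟨ρ * τ, fun m hm => ?_, by rw [hc, hb]; group⟩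
    simp [Equiv.Perm.mul_apply, hτ m hm, hρ m hm]

theorem conjRel_of_mk_eq {j : ℕ} {a b : {g : Equiv.Perm ℕ // g ∈ Sset j}}
    (h : Quot.mk (conjRel j) a = Quot.mk (conjRel j) b) : conjRel j a b := by
  exact (Equivalence.eqvGen_iff (conjRel_equivalence j)).mp (Quot.eq.mp h)

theorem rep_mem (z : Cls) : rep z ∈ Sset z.1 := (Quot.out z.2).2

theorem rep_mem' (j : ℕ) (g : Equiv.Perm ℕ) (hg : g ∈ Sset j) :
    rep (clsOf j g hg) ∈ Sset j := rep_mem (clsOf j g hg)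

theorem rep_conjRel (j : ℕ) (g : Equiv.Perm ℕ) (hg : g ∈ Sset j) :
    conjRel j ⟨g, hg⟩ ⟨rep (clsOf j g hg), rep_mem' j g hg⟩ := by
  apply conjRel_of_mk_eq
  have : Quot.mk (conjRel j) (Quot.out (Quot.mk (conjRel j) ⟨g, hg⟩)) =
      Quot.mk (conjRel j) ⟨g, hg⟩ := Quot.out_eq _
  rw [← this]
  rfl

theorem AN_rep (N j : ℕ) (g : Equiv.Perm ℕ) (hg : g ∈ Sset j) :
    AN N j (rep (clsOf j g hg)) = AN N j g :=
  (AN_eq_of_conjRel N j ⟨g, hg⟩ ⟨rep (clsOf j g hg), rep_mem' j g hg⟩ (rep_conjRel j g hg)).symm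
/-! ### Enumeration helpers -/

theorem strictMono_fin_le {m : ℕ} (f : Fin m → ℕ) (hf : StrictMono f) (b : Fin m) :
    (b : ℕ) ≤ f b := by
  obtain ⟨n, hn⟩ := b
  induction n with
  | zero => exact Nat.zero_le _
  | succ n ih =>
    have h1 : f ⟨n, by omega⟩ < f ⟨n + 1, hn⟩ := hf (by simp [Fin.lt_def])
    have h2 := ih (by omega)
    simpa using lt_of_le_of_lt h2 h1

theorem orderEmbOfFin_low {j m : ℕ} (s : Finset ℕ) (hm : s.card = m)
    (hj : Finset.range j ⊆ s) (b : Fin m) (hb : (b : ℕ) < j) :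
    s.orderEmbOfFin hm b = b := by
  have hmono := (s.orderEmbOfFin hm).strictMono
  have hge : (b : ℕ) ≤ s.orderEmbOfFin hm b := strictMono_fin_le _ hmono b
  -- reverse inequality
  set u : Fin j → ℕ := fun i => ((s.orderIsoOfFin hm).symm ⟨(i : ℕ), hj (Finset.mem_range.mpr i.2)⟩ : Fin m)
  have humono : StrictMono u := by
    intro a b hab
    have : (⟨(a : ℕ), hj (Finset.mem_range.mpr a.2)⟩ : {x // x ∈ s}) <
        ⟨(b : ℕ), hj (Finset.mem_range.mpr b.2)⟩ := by
      rw [Subtype.mk_lt_mk]; exact_mod_cast hab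
    exact (s.orderIsoOfFin hm).symm.strictMono this
  have hub : (b : ℕ) ≤ u ⟨(b : ℕ), hb⟩ := strictMono_fin_le u humono ⟨(b : ℕ), hb⟩
  have heu : s.orderEmbOfFin hm ((s.orderIsoOfFin hm).symm ⟨(b : ℕ), hj (Finset.mem_range.mpr hb)⟩) = (b : ℕ) := by
    rw [← Finset.coe_orderIsoOfFin_apply]
    rw [OrderIso.apply_symm_apply]
  have hle : s.orderEmbOfFin hm b ≤ (b : ℕ) := by
    rw [← heu]
    apply hmono.monotone
    exact_mod_cast hub
  omega

theorem orderEmbOfFin_mem_image {j m : ℕ} (s : Finset ℕ) (hm : s.card = m)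
    (hj : Finset.range j ⊆ s) (b : Fin m) (hb : j ≤ (b : ℕ)) :
    j ≤ s.orderEmbOfFin hm b :=
  le_trans hb (strictMono_fin_le _ (s.orderEmbOfFin hm).strictMono b)

/-! ### Patterns -/

def TfinN (N : ℕ) (j k : ℕ) (π : Equiv.Perm (Fin N)) : Finset ℕ :=
  Finset.range j ∪ Finset.image (fun i : Fin k => extN N π i) Finset.univ

theorem mem_TfinN (N j k : ℕ) (π : Equiv.Perm (Fin N)) (i : Fin k) :
    extN N π i ∈ TfinN N j k π := by
  apply Finset.mem_union_right
  exact Finset.mem_image_of_mem _ (Finset.mem_univ i)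

theorem range_subset_TfinN (N j k : ℕ) (π : Equiv.Perm (Fin N)) :
    Finset.range j ⊆ TfinN N j k π := Finset.subset_union_left

def Pmap (N j k : ℕ) (π : Equiv.Perm (Fin N)) : ℕ × (Fin k → ℕ) :=
  ((TfinN N j k π).card,
    fun i => ((((TfinN N j k π).orderIsoOfFin rfl).symm
      ⟨extN N π i, mem_TfinN N j k π i⟩ : Fin (TfinN N j k π).card) : ℕ))

theorem Pmap_spec (N j k : ℕ) (π : Equiv.Perm (Fin N)) (i : Fin k) :
    ∃ b : Fin (TfinN N j k π).card, (b : ℕ) = (Pmap N j k π).2 i ∧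
      (TfinN N j k π).orderEmbOfFin rfl b = extN N π i := by
  refine ⟨((TfinN N j k π).orderIsoOfFin rfl).symm ⟨extN N π i, mem_TfinN N j k π i⟩, rfl, ?_⟩
  rw [← Finset.coe_orderIsoOfFin_apply, OrderIso.apply_symm_apply]

def CovPat (j k : ℕ) (p : ℕ × (Fin k → ℕ)) : Prop :=
  j ≤ p.1 ∧ Function.Injective p.2 ∧ (∀ i, p.2 i < p.1) ∧
    (∀ x, x < p.1 → j ≤ x → ∃ i, p.2 i = x)

instance (j k : ℕ) : DecidablePred (CovPat j k) := by
  intro p; unfold CovPat; infer_instance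

theorem CovPat_Pmap (N j k : ℕ) (π : Equiv.Perm (Fin N)) : CovPat j k (Pmap N j k π) := by
  have hcard : (TfinN N j k π).card = (Pmap N j k π).1 := rfl
  refine ⟨?_, ?_, ?_, ?_⟩
  · calc j = (Finset.range j).card := by simp
    _ ≤ (TfinN N j k π).card := Finset.card_le_card (range_subset_TfinN N j k π)
    _ = (Pmap N j k π).1 := rfl
  · intro a b hab
    obtain ⟨ba, hba, heba⟩ := Pmap_spec N j k π a
    obtain ⟨bb, hbb, hebb⟩ := Pmap_spec N j k π b
    have : ba = bb := by
      apply Fin.ext; rw [hba, hbb, hab]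
    rw [this, hebb] at heba
    have h2 := (extN N π).injective heba
    have : (a : ℕ) = (b : ℕ) := by exact_mod_cast h2.symm
    exact Fin.ext this
  · intro i
    obtain ⟨b, hb, -⟩ := Pmap_spec N j k π i
    rw [← hb]; exact b.2
  · intro x hx hjx
    set b : Fin (TfinN N j k π).card := ⟨x, hx⟩ with hbdef
    have hmem : (TfinN N j k π).orderEmbOfFin rfl b ∈ TfinN N j k π :=
      Finset.orderEmbOfFin_mem _ _ _
    have hge : j ≤ (TfinN N j k π).orderEmbOfFin rfl b :=
      orderEmbOfFin_mem_image _ rfl (range_subset_TfinN N j k π) b hjx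
    have hmem2 : (TfinN N j k π).orderEmbOfFin rfl b ∈
        Finset.range j ∪ Finset.image (fun i : Fin k => extN N π i) Finset.univ := hmem
    rcases Finset.mem_union.mp hmem2 with hmem | hmem
    · rw [Finset.mem_range] at hmem; omega
    · rw [Finset.mem_image] at hmem
      obtain ⟨i, -, hi⟩ := hmem
      refine ⟨i, ?_⟩
      obtain ⟨bi, hbi, hebi⟩ := Pmap_spec N j k π i
      rw [hi] at hebi
      have hbix : (bi : ℕ) = (b : ℕ) :=
        Finset.orderEmbOfFin_eq_orderEmbOfFin_iff.mp hebi
      rw [← hbi, hbix]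

def Pats (j k : ℕ) : Finset (ℕ × (Fin k → ℕ)) :=
  ((Finset.range (j + k + 1)) ×ˢ (Fintype.piFinset fun _ : Fin k => Finset.range (j + k + 1))).filter
    (CovPat j k)

theorem mem_Pats_iff {j k : ℕ} {p : ℕ × (Fin k → ℕ)} : p ∈ Pats j k ↔ CovPat j k p := by
  constructor
  · intro hp; exact (Finset.mem_filter.mp hp).2
  · intro hp
    refine Finset.mem_filter.mpr ⟨Finset.mem_product.mpr ⟨?_, ?_⟩, hp⟩
    · -- p.1 ≤ j + k
      have hsub : Finset.Ico j p.1 ⊆ Finset.image p.2 Finset.univ := by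
        intro x hx
        rw [Finset.mem_Ico] at hx
        obtain ⟨i, hi⟩ := hp.2.2.2 x hx.2 hx.1
        exact Finset.mem_image.mpr ⟨i, Finset.mem_univ i, hi⟩
      have h1 : p.1 - j ≤ k := by
        have := Finset.card_le_card hsub
        have h2 := Finset.card_image_le (f := p.2) (s := Finset.univ)
        simp at this h2
        omega
      have := hp.1
      simp only [Finset.mem_range]
      omega
    · rw [Fintype.mem_piFinset]
      intro i
      rw [Finset.mem_range]
      have h1 := hp.2.2.1 i
      -- p.1 ≤ j + k as above
      have hsub : Finset.Ico j p.1 ⊆ Finset.image p.2 Finset.univ := by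
        intro x hx
        rw [Finset.mem_Ico] at hx
        obtain ⟨i, hi⟩ := hp.2.2.2 x hx.2 hx.1
        exact Finset.mem_image.mpr ⟨i, Finset.mem_univ i, hi⟩
      have h2 : p.1 - j ≤ k := by
        have := Finset.card_le_card hsub
        have h3 := Finset.card_image_le (f := p.2) (s := Finset.univ)
        simp at this h3
        omega
      omega

theorem Pmap_mem_Pats (N j k : ℕ) (π : Equiv.Perm (Fin N)) : Pmap N j k π ∈ Pats j k :=
  mem_Pats_iff.mpr (CovPat_Pmap N j k π)
/-! ### The reduced element attached to a pattern -/

def Qp (j k : ℕ) (p : ℕ × (Fin k → ℕ)) : Equiv.Perm ℕ :=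
  if hp : Function.Injective p.2 ∧ ∀ i, p.2 i < p.1 then
    Classical.choose (exists_perm_extend p.2 hp.1 hp.2)
  else 1

theorem Qp_spec {j k : ℕ} {p : ℕ × (Fin k → ℕ)} (h1 : Function.Injective p.2)
    (h2 : ∀ i, p.2 i < p.1) :
    (∀ i : Fin k, Qp j k p i = p.2 i) ∧ (∀ x, p.1 ≤ x → Qp j k p x = x) := by
  rw [Qp, dif_pos ⟨h1, h2⟩]
  exact Classical.choose_spec (exists_perm_extend p.2 h1 h2)

def Rpat (j k : ℕ) (g h : Equiv.Perm ℕ) (p : ℕ × (Fin k → ℕ)) : Equiv.Perm ℕ :=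
  g * (Qp j k p * h * (Qp j k p)⁻¹)

theorem Rpat_mem {j k : ℕ} {g h : Equiv.Perm ℕ} (hg : g ∈ Sset j) (hh : h ∈ Sset k)
    {p : ℕ × (Fin k → ℕ)} (hp : CovPat j k p) :
    Rpat j k g h p ∈ Sset p.1 := by
  obtain ⟨hq1, hq2⟩ := Qp_spec hp.2.1 hp.2.2.1
  intro x hx
  have hy : (Qp j k p * h * (Qp j k p)⁻¹) x = x := by
    set y := (Qp j k p)⁻¹ x with hy
    have hQy : Qp j k p y = x := by rw [hy]; simp
    have hyk : k ≤ y := by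
      by_contra hlt
      push_neg at hlt
      have : Qp j k p y = p.2 ⟨y, hlt⟩ := hq1 ⟨y, hlt⟩
      rw [hQy] at this
      have := hp.2.2.1 ⟨y, hlt⟩
      omega
    have : h y = y := hh y hyk
    show Qp j k p (h ((Qp j k p)⁻¹ x)) = x
    rw [← hy, this, hQy]
  show g ((Qp j k p * h * (Qp j k p)⁻¹) x) = x
  rw [hy]
  exact hg x (le_trans hp.1 hx)

/-- The key bridging lemma: the summand attached to `π` only depends on its pattern. -/
theorem SumC_bridge {N j k : ℕ} (hjN : j ≤ N) (hkN : k ≤ N) {g h : Equiv.Perm ℕ}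
    (hg : g ∈ Sset j) (hh : h ∈ Sset k) (π : Equiv.Perm (Fin N)) :
    SumC N (g * (extN N π * h * (extN N π)⁻¹)) = SumC N (Rpat j k g h (Pmap N j k π)) := by
  set T := TfinN N j k π with hT
  have hTsub : T ⊆ Finset.range N := by
    intro x hx
    have hx' : x ∈ Finset.range j ∪ Finset.image (fun i : Fin k => extN N π i) Finset.univ := hx
    rcases Finset.mem_union.mp hx' with hx1 | hx1
    · rw [Finset.mem_range] at hx1 ⊢; omega
    · rw [Finset.mem_image] at hx1
      obtain ⟨i, -, rfl⟩ := hx1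
      rw [Finset.mem_range]
      exact extN_lt N π i (lt_of_lt_of_le i.2 hkN)
  have hmN : T.card ≤ N := by
    have := Finset.card_le_card hTsub
    simpa using this
  have hcov := CovPat_Pmap N j k π
  have hjm : j ≤ T.card := hcov.1
  set w : Fin T.card → ℕ := fun b => T.orderEmbOfFin rfl b with hw
  have hwinj : Function.Injective w := (T.orderEmbOfFin rfl).injective
  have hwbd : ∀ b, w b < N := by
    intro b
    have : w b ∈ T := Finset.orderEmbOfFin_mem _ _ _
    have := hTsub this
    rwa [Finset.mem_range] at this
  obtain ⟨Δ, hΔ1, hΔ2⟩ := exists_perm_extend w hwinj hwbd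
  obtain ⟨Δ₀, hΔ₀⟩ := exists_extN_eq N Δ hΔ2
  have hconj : g * (extN N π * h * (extN N π)⁻¹) =
      Δ * Rpat j k g h (Pmap N j k π) * Δ⁻¹ := by
    have hgconj : Δ * g * Δ⁻¹ = g := by
      have := conj_eq_of_agree hg Δ 1 (fun i hi => ?_)
      · rw [this]; group
      · have hi' : i < T.card := lt_of_lt_of_le hi hjm
        have : Δ i = w ⟨i, hi'⟩ := hΔ1 ⟨i, hi'⟩
        rw [this]
        show T.orderEmbOfFin rfl ⟨i, hi'⟩ = (1 : Equiv.Perm ℕ) i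
        rw [orderEmbOfFin_low T rfl (range_subset_TfinN N j k π) ⟨i, hi'⟩ hi]
        rfl
    have hhconj : (Δ * Qp j k (Pmap N j k π)) * h * (Δ * Qp j k (Pmap N j k π))⁻¹ =
        extN N π * h * (extN N π)⁻¹ := by
      apply conj_eq_of_agree hh
      intro i hi
      obtain ⟨hq1, hq2⟩ := Qp_spec hcov.2.1 hcov.2.2.1
      obtain ⟨b, hb, heb⟩ := Pmap_spec N j k π ⟨i, hi⟩
      have h1 : Qp j k (Pmap N j k π) i = (Pmap N j k π).2 ⟨i, hi⟩ := hq1 ⟨i, hi⟩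
      have h2 : Δ ((Pmap N j k π).2 ⟨i, hi⟩) = w b := by rw [← hb]; exact hΔ1 b
      show Δ (Qp j k (Pmap N j k π) i) = extN N π i
      rw [h1, h2]
      show T.orderEmbOfFin rfl b = extN N π i
      exact heb
    rw [Rpat]
    calc g * (extN N π * h * (extN N π)⁻¹)
        = (Δ * g * Δ⁻¹) * ((Δ * Qp j k (Pmap N j k π)) * h * (Δ * Qp j k (Pmap N j k π))⁻¹) := by
          rw [hgconj, hhconj]
    _ = Δ * (g * (Qp j k (Pmap N j k π) * h * (Qp j k (Pmap N j k π))⁻¹)) * Δ⁻¹ := by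
          group
  rw [hconj, ← hΔ₀, SumC_conj]
/-! ### Counting lemmas -/

theorem card_subtype_ge (N k : ℕ) (hk : k ≤ N) :
    Fintype.card {x : Fin N // k ≤ (x : ℕ)} = N - k := by
  have e : {x : Fin N // k ≤ (x : ℕ)} ≃ Fin (N - k) :=
    { toFun := fun x => ⟨(x : ℕ) - k, by have h1 := x.1.2; have h2 := x.2; omega⟩
      invFun := fun y => ⟨⟨(y : ℕ) + k, by have := y.2; omega⟩, by simp⟩
      left_inv := by
        rintro ⟨⟨x, hx⟩, hkx⟩
        apply Subtype.ext
        apply Fin.ext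
        show x - k + k = x
        have hkx' : k ≤ x := hkx
        omega
      right_inv := by
        rintro ⟨y, hy⟩
        apply Fin.ext
        simp }
  rw [Fintype.card_congr e, Fintype.card_fin]

theorem card_fix_low (N k : ℕ) (hk : k ≤ N) :
    (Finset.univ.filter fun π : Equiv.Perm (Fin N) =>
      ∀ x : Fin N, (x : ℕ) < k → π x = x).card = Nat.factorial (N - k) := by
  classical
  have h1 : (Finset.univ.filter fun π : Equiv.Perm (Fin N) =>
      ∀ x : Fin N, (x : ℕ) < k → π x = x).card
      = Fintype.card {π : Equiv.Perm (Fin N) // ∀ x : Fin N, ¬ (k ≤ (x : ℕ)) → π x = x} := by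
    rw [Fintype.card_subtype]
    congr 1
    apply Finset.filter_congr
    intro π _
    constructor
    · intro hπ x hx; exact hπ x (by omega)
    · intro hπ x hx; exact hπ x (by omega)
  rw [h1]
  have e := (Equiv.Perm.subtypeEquivSubtypePerm (fun x : Fin N => k ≤ (x : ℕ)))
  rw [← Fintype.card_congr e]
  rw [Fintype.card_perm, card_subtype_ge N k hk]

theorem card_fiber_ext (N k : ℕ) (hk : k ≤ N) (v : Fin k → ℕ)
    (hinj : Function.Injective v) (hbd : ∀ i, v i < N) :
    (Finset.univ.filter fun π : Equiv.Perm (Fin N) =>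
      ∀ i : Fin k, extN N π i = v i).card = Nat.factorial (N - k) := by
  classical
  obtain ⟨Q, hQ1, hQ2⟩ := exists_perm_extend v hinj hbd
  obtain ⟨π₀, hπ₀⟩ := exists_extN_eq N Q hQ2
  have hπ₀v : ∀ i : Fin k, extN N π₀ i = v i := by
    intro i; rw [hπ₀]; exact hQ1 i
  rw [← card_fix_low N k hk]
  apply Finset.card_bij' (fun π _ => π₀⁻¹ * π) (fun ρ _ => π₀ * ρ)
  · intro π hπ
    rw [Finset.mem_filter] at hπ ⊢
    refine ⟨Finset.mem_univ _, ?_⟩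
    intro x hx
    have h1 : extN N π (x : ℕ) = v ⟨(x : ℕ), hx⟩ := hπ.2 ⟨(x : ℕ), hx⟩
    have h2 : extN N π₀ (x : ℕ) = v ⟨(x : ℕ), hx⟩ := hπ₀v ⟨(x : ℕ), hx⟩
    have h3 : π x = π₀ x := by
      have e1 : extN N π (x : ℕ) = ((π x : Fin N) : ℕ) := by
        rw [extN_apply_lt N π x x.2]
      have e2 : extN N π₀ (x : ℕ) = ((π₀ x : Fin N) : ℕ) := by
        rw [extN_apply_lt N π₀ x x.2]
      apply Fin.ext
      rw [← e1, ← e2, h1, h2]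
    show (π₀⁻¹ * π) x = x
    rw [Equiv.Perm.mul_apply, h3]
    simp
  · intro ρ hρ
    rw [Finset.mem_filter] at hρ ⊢
    refine ⟨Finset.mem_univ _, ?_⟩
    intro i
    have hik : (i : ℕ) < N := lt_of_lt_of_le i.2 hk
    have h1 : ρ ⟨(i : ℕ), hik⟩ = ⟨(i : ℕ), hik⟩ := hρ.2 ⟨(i : ℕ), hik⟩ i.2
    rw [extN_apply_lt N _ _ hik]
    show ((π₀ * ρ) ⟨(i : ℕ), hik⟩ : ℕ) = v i
    rw [Equiv.Perm.mul_apply, h1]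
    have := hπ₀v i
    rw [extN_apply_lt N π₀ _ hik] at this
    exact this
  · intro π _; group
  · intro ρ _; group

theorem card_validT (N j m : ℕ) (hj : j ≤ m) (hjN : j ≤ N) :
    (((Finset.range N).powerset).filter fun T : Finset ℕ =>
      Finset.range j ⊆ T ∧ T.card = m).card = Nat.choose (N - j) (m - j) := by
  classical
  have hc : (Finset.range N \ Finset.range j).card = N - j := by
    rw [Finset.card_sdiff_of_subset (by intro x hx; rw [Finset.mem_range] at hx ⊢; omega),
      Finset.card_range, Finset.card_range]
  rw [← hc, ← Finset.card_powersetCard]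
  apply Finset.card_bij' (fun T _ => T \ Finset.range j) (fun S _ => S ∪ Finset.range j)
  · intro T hT
    rw [Finset.mem_filter, Finset.mem_powerset] at hT
    obtain ⟨hTN, hjT, hTm⟩ := hT
    rw [Finset.mem_powersetCard]
    constructor
    · exact Finset.sdiff_subset_sdiff hTN (le_refl _)
    · rw [Finset.card_sdiff_of_subset hjT, hTm, Finset.card_range]
  · intro S hS
    rw [Finset.mem_powersetCard] at hS
    obtain ⟨hSsub, hScard⟩ := hS
    have hSdisj : Disjoint S (Finset.range j) := by
      apply Finset.disjoint_left.mpr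
      intro x hxS hxj
      have := hSsub hxS
      rw [Finset.mem_sdiff] at this
      exact this.2 hxj
    rw [Finset.mem_filter, Finset.mem_powerset]
    refine ⟨?_, Finset.subset_union_right, ?_⟩
    · apply Finset.union_subset
      · intro x hx
        exact (Finset.mem_sdiff.mp (hSsub hx)).1
      · intro x hx
        rw [Finset.mem_range] at hx ⊢
        omega
    · rw [Finset.card_union_of_disjoint hSdisj, hScard, Finset.card_range]
      omega
  · intro T hT
    rw [Finset.mem_filter, Finset.mem_powerset] at hT
    exact Finset.sdiff_union_of_subset hT.2.1
  · intro S hS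
    rw [Finset.mem_powersetCard] at hS
    apply Finset.union_sdiff_cancel_right
    apply Finset.disjoint_left.mpr
    intro x hxS hxj
    exact (Finset.mem_sdiff.mp (hS.1 hxS)).2 hxj
/-! ### The fiber of the pattern map -/

theorem orderEmbOfFin_congr {s s' : Finset ℕ} (hss' : s = s') {m m' : ℕ}
    (hm : s.card = m) (hm' : s'.card = m') {b : Fin m} {b' : Fin m'}
    (hbb' : (b : ℕ) = (b' : ℕ)) : s.orderEmbOfFin hm b = s'.orderEmbOfFin hm' b' := by
  subst hss'
  exact Finset.orderEmbOfFin_eq_orderEmbOfFin_iff.mpr hbb'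

theorem orderEmbOfFin_congr' {s s' : Finset ℕ} (hss' : s = s') {m m' : ℕ}
    (hm : s.card = m) (hm' : s'.card = m') {b : Fin m} {b' : Fin m'}
    (h : s.orderEmbOfFin hm b = s'.orderEmbOfFin hm' b') : (b : ℕ) = (b' : ℕ) := by
  subst hss'
  exact Finset.orderEmbOfFin_eq_orderEmbOfFin_iff.mp h

theorem TfinN_subset_range {N j k : ℕ} (hjN : j ≤ N) (hkN : k ≤ N) (π : Equiv.Perm (Fin N)) :
    TfinN N j k π ⊆ Finset.range N := by
  intro x hx
  have hx' : x ∈ Finset.range j ∪ Finset.image (fun i : Fin k => extN N π i) Finset.univ := hx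
  rcases Finset.mem_union.mp hx' with hx1 | hx1
  · rw [Finset.mem_range] at hx1 ⊢; omega
  · rw [Finset.mem_image] at hx1
    obtain ⟨i, -, rfl⟩ := hx1
    rw [Finset.mem_range]
    exact extN_lt N π i (lt_of_lt_of_le i.2 hkN)

theorem Pmap_fst_le {N j k : ℕ} (hjN : j ≤ N) (hkN : k ≤ N) (π : Equiv.Perm (Fin N)) :
    (Pmap N j k π).1 ≤ N := by
  have := Finset.card_le_card (TfinN_subset_range hjN hkN π)
  simpa [Pmap] using this

theorem card_Pmap_fiber {N j k : ℕ} (hjN : j ≤ N) (hkN : k ≤ N) (p : ℕ × (Fin k → ℕ))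
    (hp : CovPat j k p) (hpN : p.1 ≤ N) :
    (Finset.univ.filter fun π : Equiv.Perm (Fin N) => Pmap N j k π = p).card
      = Nat.choose (N - j) (p.1 - j) * Nat.factorial (N - k) := by
  classical
  set valid : Finset (Finset ℕ) :=
    ((Finset.range N).powerset).filter fun T => Finset.range j ⊆ T ∧ T.card = p.1 with hvalid
  have hmaps : ∀ π ∈ (Finset.univ.filter fun π : Equiv.Perm (Fin N) => Pmap N j k π = p),
      TfinN N j k π ∈ valid := by
    intro π hπ
    rw [Finset.mem_filter] at hπ
    rw [hvalid, Finset.mem_filter, Finset.mem_powerset]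
    refine ⟨TfinN_subset_range hjN hkN π, range_subset_TfinN N j k π, ?_⟩
    have : (TfinN N j k π).card = (Pmap N j k π).1 := rfl
    rw [this, hπ.2]
  rw [Finset.card_eq_sum_card_fiberwise hmaps]
  have hinner : ∀ T ∈ valid,
      (((Finset.univ.filter fun π : Equiv.Perm (Fin N) => Pmap N j k π = p)).filter
        fun π => TfinN N j k π = T).card = Nat.factorial (N - k) := by
    intro T hT
    rw [hvalid, Finset.mem_filter, Finset.mem_powerset] at hT
    obtain ⟨hTN, hjT, hTm⟩ := hT
    set v : Fin k → ℕ := fun i => T.orderEmbOfFin hTm ⟨p.2 i, hp.2.2.1 i⟩ with hv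
    have hvinj : Function.Injective v := by
      intro a b hab
      have := (T.orderEmbOfFin hTm).injective hab
      have h2 : p.2 a = p.2 b := by
        have := congrArg Fin.val this
        simpa using this
      exact hp.2.1 h2
    have hvbd : ∀ i, v i < N := by
      intro i
      have : v i ∈ T := Finset.orderEmbOfFin_mem _ _ _
      have := hTN this
      rwa [Finset.mem_range] at this
    rw [← card_fiber_ext N k hkN v hvinj hvbd]
    rw [Finset.filter_filter]
    congr 1
    apply Finset.filter_congr
    intro π _
    constructor
    · rintro ⟨hPm, hTf⟩
      intro i
      obtain ⟨b, hb, heb⟩ := Pmap_spec N j k π i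
      rw [← heb]
      apply orderEmbOfFin_congr hTf
      rw [hb, hPm]
    · intro hvv
      have hTf : TfinN N j k π = T := by
        apply Finset.Subset.antisymm
        · apply Finset.union_subset hjT
          intro x hx
          rw [Finset.mem_image] at hx
          obtain ⟨i, -, rfl⟩ := hx
          rw [hvv i]
          exact Finset.orderEmbOfFin_mem _ _ _
        · intro x hx
          set b : Fin p.1 := (T.orderIsoOfFin hTm).symm ⟨x, hx⟩ with hbdef
          have hebx : T.orderEmbOfFin hTm b = x := by
            rw [← Finset.coe_orderIsoOfFin_apply, hbdef, OrderIso.apply_symm_apply]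
          rcases lt_or_ge (b : ℕ) j with hbj | hbj
          · apply Finset.mem_union_left
            rw [Finset.mem_range]
            have := orderEmbOfFin_low T hTm hjT b hbj
            rw [this] at hebx
            omega
          · obtain ⟨i, hi⟩ := hp.2.2.2 (b : ℕ) b.2 hbj
            apply Finset.mem_union_right
            rw [Finset.mem_image]
            refine ⟨i, Finset.mem_univ i, ?_⟩
            rw [hvv i]
            show T.orderEmbOfFin hTm ⟨p.2 i, hp.2.2.1 i⟩ = x
            have hfin : (⟨p.2 i, hp.2.2.1 i⟩ : Fin p.1) = b := Fin.ext hi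
            rw [hfin, hebx]
      refine ⟨?_, hTf⟩
      have hfst : (Pmap N j k π).1 = p.1 := by
        have h1 : (Pmap N j k π).1 = (TfinN N j k π).card := rfl
        rw [h1, hTf, hTm]
      have hsnd : (Pmap N j k π).2 = p.2 := by
        funext i
        obtain ⟨b, hb, heb⟩ := Pmap_spec N j k π i
        rw [hvv i, hv] at heb
        have := orderEmbOfFin_congr' hTf rfl hTm heb
        rw [← hb, this]
      exact Prod.ext hfst hsnd
  rw [Finset.sum_congr rfl hinner, Finset.sum_const, hvalid,
    card_validT N j p.1 hp.1 hjN, smul_eq_mul]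
/-! ### The core identity -/

theorem CovPat_k_le {j k : ℕ} {p : ℕ × (Fin k → ℕ)} (hp : CovPat j k p) : k ≤ p.1 := by
  classical
  have hsub : Finset.image p.2 Finset.univ ⊆ Finset.range p.1 := by
    intro x hx
    rw [Finset.mem_image] at hx
    obtain ⟨i, -, rfl⟩ := hx
    rw [Finset.mem_range]
    exact hp.2.2.1 i
  have h1 := Finset.card_le_card hsub
  rw [Finset.card_image_of_injective _ hp.2.1] at h1
  simpa using h1

theorem core_identity (N j k : ℕ) (g h : Equiv.Perm ℕ) (hg : g ∈ Sset j) (hh : h ∈ Sset k) :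
    AN N j g * AN N k h
      = ∑ p ∈ Pats j k, ((Nat.factorial (p.1 - j) : ℂ))⁻¹ • AN N p.1 (Rpat j k g h p) := by
  classical
  by_cases hbad : j ≤ N ∧ k ≤ N
  case neg =>
    -- both sides vanish
    have hLHS : AN N j g * AN N k h = 0 := by
      rcases not_and_or.mp hbad with hb | hb
      · rw [AN, if_neg hb, zero_mul]
      · have h0 : AN N k h = 0 := by rw [AN, if_neg hb]
        rw [h0, mul_zero]
    rw [hLHS]
    symm
    apply Finset.sum_eq_zero
    intro p hp
    have hcov := mem_Pats_iff.mp hp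
    have h1 : j ≤ p.1 := hcov.1
    have h2 : k ≤ p.1 := CovPat_k_le hcov
    have : ¬ (p.1 ≤ N) := by
      rcases not_and_or.mp hbad with hb | hb <;> omega
    rw [AN, if_neg this, smul_zero]
  case pos =>
  obtain ⟨hjN, hkN⟩ := hbad
  rw [AN_eq_smul_SumC N j g hjN, AN_eq_smul_SumC N k h hkN]
  rw [smul_mul_assoc, mul_smul_comm]
  have hexp : SumC N g * SumC N h
      = ∑ π : Equiv.Perm (Fin N), SumC N (Rpat j k g h (Pmap N j k π)) := by
    rw [SumC, SumC, Finset.sum_mul_sum]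
    have hstep : ∀ σ : Equiv.Perm (Fin N),
        (∑ τ : Equiv.Perm (Fin N),
          (MonoidAlgebra.of ℂ (Equiv.Perm ℕ) (extN N σ * g * (extN N σ)⁻¹)) *
            (MonoidAlgebra.of ℂ (Equiv.Perm ℕ) (extN N τ * h * (extN N τ)⁻¹)))
        = ∑ π : Equiv.Perm (Fin N),
            MonoidAlgebra.of ℂ (Equiv.Perm ℕ)
              (extN N σ * (g * (extN N π * h * (extN N π)⁻¹)) * (extN N σ)⁻¹) := by
      intro σ
      rw [← Equiv.sum_comp (Equiv.mulLeft σ) (fun τ =>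
        (MonoidAlgebra.of ℂ (Equiv.Perm ℕ) (extN N σ * g * (extN N σ)⁻¹)) *
          (MonoidAlgebra.of ℂ (Equiv.Perm ℕ) (extN N τ * h * (extN N τ)⁻¹)))]
      apply Finset.sum_congr rfl
      intro π _
      rw [← map_mul]
      congr 1
      simp only [Equiv.coe_mulLeft, extN_mul, mul_inv_rev]
      group
    rw [Finset.sum_congr rfl (fun σ _ => hstep σ)]
    rw [Finset.sum_comm]
    apply Finset.sum_congr rfl
    intro π _
    rw [show (∑ σ : Equiv.Perm (Fin N), MonoidAlgebra.of ℂ (Equiv.Perm ℕ)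
        (extN N σ * (g * (extN N π * h * (extN N π)⁻¹)) * (extN N σ)⁻¹))
      = SumC N (g * (extN N π * h * (extN N π)⁻¹)) from rfl]
    exact SumC_bridge hjN hkN hg hh π
  rw [hexp]
  rw [← Finset.sum_fiberwise_of_maps_to (fun π _ => Pmap_mem_Pats N j k π)
    (fun π => SumC N (Rpat j k g h (Pmap N j k π)))]
  have hfib : ∀ p ∈ Pats j k,
      (∑ π ∈ Finset.univ.filter fun π : Equiv.Perm (Fin N) => Pmap N j k π = p,
        SumC N (Rpat j k g h (Pmap N j k π)))
      = (Finset.univ.filter fun π : Equiv.Perm (Fin N) => Pmap N j k π = p).card •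
          SumC N (Rpat j k g h p) := by
    intro p hp
    rw [← Finset.sum_const]
    apply Finset.sum_congr rfl
    intro π hπ
    rw [(Finset.mem_filter.mp hπ).2]
  rw [Finset.sum_congr rfl hfib, Finset.smul_sum, Finset.smul_sum]
  apply Finset.sum_congr rfl
  intro p hp
  have hcov := mem_Pats_iff.mp hp
  rcases le_or_gt p.1 N with hpN | hpN
  · rw [card_Pmap_fiber hjN hkN p hcov hpN]
    rw [AN_eq_smul_SumC N p.1 _ hpN]
    rw [← Nat.cast_smul_eq_nsmul ℂ, smul_smul, smul_smul, smul_smul]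
    congr 1
    have hkey : Nat.choose (N - j) (p.1 - j) * Nat.factorial (p.1 - j)
        * Nat.factorial (N - p.1) = Nat.factorial (N - j) := by
      have h0 : p.1 - j ≤ N - j := by have := hcov.1; omega
      have := Nat.choose_mul_factorial_mul_factorial h0
      rw [show N - j - (p.1 - j) = N - p.1 by have := hcov.1; omega] at this
      exact this
    have hne1 : ((Nat.factorial (N - j) : ℂ)) ≠ 0 := by
      exact_mod_cast Nat.factorial_ne_zero (N - j)
    have hne2 : ((Nat.factorial (N - k) : ℂ)) ≠ 0 := by
      exact_mod_cast Nat.factorial_ne_zero (N - k)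
    have hne3 : ((Nat.factorial (p.1 - j) : ℂ)) ≠ 0 := by
      exact_mod_cast Nat.factorial_ne_zero (p.1 - j)
    have hne4 : ((Nat.factorial (N - p.1) : ℂ)) ≠ 0 := by
      exact_mod_cast Nat.factorial_ne_zero (N - p.1)
    field_simp
    push_cast
    rw [← hkey]
    push_cast
    ring
  · have hfib0 : (Finset.univ.filter fun π : Equiv.Perm (Fin N) => Pmap N j k π = p).card = 0 := by
      rw [Finset.card_eq_zero]
      apply Finset.filter_eq_empty_iff.mpr
      intro π _
      intro hPm
      have := Pmap_fst_le hjN hkN π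
      rw [hPm] at this
      omega
    rw [hfib0, AN, if_neg (by omega)]
    simp
/-! ### Shift permutations and the free action -/

theorem extN_one (N : ℕ) : extN N (1 : Equiv.Perm (Fin N)) = 1 := by
  ext x
  rcases lt_or_ge x N with h | h
  · rw [extN_apply_lt N 1 x h]; rfl
  · rw [extN_apply_ge N 1 x h]; rfl

def shiftPerm (j d : ℕ) (π : Equiv.Perm (Fin d)) : Equiv.Perm ℕ where
  toFun x := if x < j then x else j + extN d π (x - j)
  invFun x := if x < j then x else j + (extN d π)⁻¹ (x - j)
  left_inv := by
    intro x
    by_cases hx : x < j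
    · simp [hx]
    · push_neg at hx
      have h1 : ¬ (j + extN d π (x - j) < j) := by omega
      simp only [if_neg (not_lt.mpr hx), if_neg h1]
      have h2 : j + extN d π (x - j) - j = extN d π (x - j) := by omega
      rw [h2, Equiv.Perm.inv_def, Equiv.symm_apply_apply]
      omega
  right_inv := by
    intro x
    by_cases hx : x < j
    · simp [hx]
    · push_neg at hx
      have h1 : ¬ (j + (extN d π)⁻¹ (x - j) < j) := by omega
      simp only [if_neg (not_lt.mpr hx), if_neg h1]
      have h2 : j + (extN d π)⁻¹ (x - j) - j = (extN d π)⁻¹ (x - j) := by omega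
      rw [h2, Equiv.Perm.inv_def, Equiv.apply_symm_apply]
      omega

theorem shiftPerm_lt {j d : ℕ} (π : Equiv.Perm (Fin d)) {x : ℕ} (hx : x < j) :
    shiftPerm j d π x = x := if_pos hx

theorem shiftPerm_ge {j d : ℕ} (π : Equiv.Perm (Fin d)) {x : ℕ} (hx : j ≤ x) :
    shiftPerm j d π x = j + extN d π (x - j) := if_neg (not_lt.mpr hx)

theorem shiftPerm_big {j d : ℕ} (π : Equiv.Perm (Fin d)) {x : ℕ} (hx : j + d ≤ x) :
    shiftPerm j d π x = x := by
  rw [shiftPerm_ge π (by omega), extN_apply_ge d π (x - j) (by omega)]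
  omega

theorem shiftPerm_mem {j d : ℕ} (π : Equiv.Perm (Fin d)) {x : ℕ} (hx : j ≤ x)
    (hxd : x < j + d) : j ≤ shiftPerm j d π x ∧ shiftPerm j d π x < j + d := by
  rw [shiftPerm_ge π hx]
  have := extN_lt d π (x - j) (by omega)
  omega

theorem shiftPerm_inv {j d : ℕ} (π : Equiv.Perm (Fin d)) :
    (shiftPerm j d π)⁻¹ = shiftPerm j d π⁻¹ := by
  ext x
  show (shiftPerm j d π).symm x = shiftPerm j d π⁻¹ x
  by_cases hx : x < j
  · have h1 : (shiftPerm j d π).symm x = x := by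
      apply (shiftPerm j d π).injective
      rw [Equiv.apply_symm_apply, shiftPerm_lt π hx]
    rw [h1, shiftPerm_lt _ hx]
  · push_neg at hx
    show (if x < j then x else j + (extN d π)⁻¹ (x - j)) = _
    rw [if_neg (not_lt.mpr hx), shiftPerm_ge _ hx, extN_inv]

theorem shiftPerm_one (j d : ℕ) : shiftPerm j d (1 : Equiv.Perm (Fin d)) = 1 := by
  ext x
  by_cases hx : x < j
  · rw [shiftPerm_lt _ hx]; rfl
  · push_neg at hx
    rw [shiftPerm_ge _ hx, extN_one]
    show j + (x - j) = x
    omega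

theorem shiftPerm_mul {j d : ℕ} (σ τ : Equiv.Perm (Fin d)) (x : ℕ) :
    shiftPerm j d σ (shiftPerm j d τ x) = shiftPerm j d (σ * τ) x := by
  by_cases hx : x < j
  · rw [shiftPerm_lt _ hx, shiftPerm_lt _ hx, shiftPerm_lt _ hx]
  · push_neg at hx
    rw [shiftPerm_ge τ hx, shiftPerm_ge σ (by omega), shiftPerm_ge _ hx]
    have h2 : j + extN d τ (x - j) - j = extN d τ (x - j) := by omega
    rw [h2, extN_mul]
    rfl

/-- A free action of a finite group on a finite set has orbits of full size, hence
the cardinality of any invariant set is divisible by the group order. -/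
theorem card_dvd_of_free_action {G α : Type*} [Group G] [Fintype G] [DecidableEq G]
    [DecidableEq α] (φ : G → α → α) (hid : ∀ a, φ 1 a = a)
    (hcomp : ∀ g h a, φ g (φ h a) = φ (g * h) a) :
    ∀ (S : Finset α), (∀ g, ∀ a ∈ S, φ g a ∈ S) →
      (∀ g a, a ∈ S → φ g a = a → g = 1) → Fintype.card G ∣ S.card := by
  classical
  suffices H : ∀ n (S : Finset α), S.card = n → (∀ g, ∀ a ∈ S, φ g a ∈ S) →
      (∀ g a, a ∈ S → φ g a = a → g = 1) → Fintype.card G ∣ S.card by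
    intro S hS hfree; exact H S.card S rfl hS hfree
  intro n
  induction n using Nat.strong_induction_on with
  | _ n ih =>
    intro S hn hS hfree
    rcases S.eq_empty_or_nonempty with rfl | ⟨a, ha⟩
    · simp
    · set O : Finset α := Finset.image (fun g => φ g a) Finset.univ with hO
      have hinj : Function.Injective (fun g => φ g a) := by
        intro g g' hgg'
        have h1 : φ (g'⁻¹ * g) a = a := by
          rw [← hcomp]
          show φ g'⁻¹ (φ g a) = a
          rw [show φ g a = φ g' a from hgg']
          show φ g'⁻¹ (φ g' a) = a
          rw [hcomp, inv_mul_cancel, hid]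
        have := hfree _ _ ha h1
        rw [inv_mul_eq_one] at this
        exact this.symm
      have hOcard : O.card = Fintype.card G := by
        rw [hO, Finset.card_image_of_injective _ hinj, Finset.card_univ]
      have hOsub : O ⊆ S := by
        intro x hx
        rw [hO, Finset.mem_image] at hx
        obtain ⟨g, -, rfl⟩ := hx
        exact hS g a ha
      set S' : Finset α := S \ O with hS'
      have hS'S : ∀ g, ∀ b ∈ S', φ g b ∈ S' := by
        intro g b hb
        rw [hS', Finset.mem_sdiff] at hb ⊢
        refine ⟨hS g b hb.1, ?_⟩
        intro hmem
        apply hb.2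
        rw [hO, Finset.mem_image] at hmem
        obtain ⟨g', -, hg'⟩ := hmem
        rw [hO, Finset.mem_image]
        refine ⟨g⁻¹ * g', Finset.mem_univ _, ?_⟩
        rw [← hcomp]
        show φ g⁻¹ (φ g' a) = b
        rw [hg', hcomp, inv_mul_cancel, hid]
      have hfree' : ∀ g b, b ∈ S' → φ g b = b → g = 1 := by
        intro g b hb
        exact hfree g b (Finset.mem_sdiff.mp hb).1
      have hcard' : S'.card = S.card - Fintype.card G := by
        rw [hS', Finset.card_sdiff_of_subset hOsub, hOcard]
      have hGpos : 0 < Fintype.card G := Fintype.card_pos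
      have hOle : Fintype.card G ≤ S.card := by
        rw [← hOcard]; exact Finset.card_le_card hOsub
      have hlt : S'.card < n := by
        rw [hcard', hn]
        have hnpos : 0 < n := by
          rw [← hn]
          exact Finset.card_pos.mpr ⟨a, ha⟩
        omega
      have hdvd : Fintype.card G ∣ S'.card := ih S'.card hlt S' rfl hS'S hfree'
      have : S.card = S'.card + Fintype.card G := by
        rw [hcard']; omega
      rw [this]
      exact Nat.dvd_add hdvd dvd_rfl
/-! ### Action on patterns and divisibility of the fiber counts -/

noncomputable instance : DecidableEq Cls := Classical.decEq _

def shiftPat (j k d : ℕ) (π : Equiv.Perm (Fin d)) (p : ℕ × (Fin k → ℕ)) : ℕ × (Fin k → ℕ) :=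
  (p.1, fun i => shiftPerm j d π (p.2 i))

theorem shiftPat_covpat {j k d : ℕ} {p : ℕ × (Fin k → ℕ)} (hp : CovPat j k p)
    (hpm : p.1 = j + d) (π : Equiv.Perm (Fin d)) : CovPat j k (shiftPat j k d π p) := by
  refine ⟨hp.1, ?_, ?_, ?_⟩
  · intro a b hab
    exact hp.2.1 ((shiftPerm j d π).injective hab)
  · intro i
    rcases lt_or_ge (p.2 i) j with hi | hi
    · show shiftPerm j d π (p.2 i) < p.1
      rw [shiftPerm_lt π hi]
      have := hp.1; omega
    · show shiftPerm j d π (p.2 i) < p.1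
      have hmem := shiftPerm_mem π hi (by rw [← hpm]; exact hp.2.2.1 i)
      omega
  · intro x hx1 hx2
    have hfst' : (shiftPat j k d π p).1 = p.1 := rfl
    rw [hfst', hpm] at hx1
    have hy := shiftPerm_mem (π⁻¹) hx2 (by omega)
    obtain ⟨i, hi⟩ := hp.2.2.2 (shiftPerm j d π⁻¹ x) (by omega) hy.1
    refine ⟨i, ?_⟩
    show shiftPerm j d π (p.2 i) = x
    rw [hi, shiftPerm_mul, mul_inv_cancel, shiftPerm_one]
    rfl

theorem shiftPat_Rpat {j k d : ℕ} {g h : Equiv.Perm ℕ} (hg : g ∈ Sset j) (hh : h ∈ Sset k)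
    {p : ℕ × (Fin k → ℕ)} (hp : CovPat j k p) (hpm : p.1 = j + d) (π : Equiv.Perm (Fin d)) :
    Rpat j k g h (shiftPat j k d π p)
      = shiftPerm j d π * Rpat j k g h p * (shiftPerm j d π)⁻¹ := by
  set Ψ := shiftPerm j d π with hΨ
  have hp' := shiftPat_covpat hp hpm π
  obtain ⟨hq1, hq2⟩ := Qp_spec hp.2.1 hp.2.2.1
  obtain ⟨hq1', hq2'⟩ := Qp_spec hp'.2.1 hp'.2.2.1
  have hgconj : g = Ψ * g * Ψ⁻¹ := by
    have := conj_eq_of_agree hg Ψ 1 (fun i hi => by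
      rw [hΨ, shiftPerm_lt π hi]; rfl)
    rw [this]; group
  have hhconj : Qp j k (shiftPat j k d π p) * h * (Qp j k (shiftPat j k d π p))⁻¹
      = (Ψ * Qp j k p) * h * (Ψ * Qp j k p)⁻¹ := by
    apply conj_eq_of_agree hh
    intro i hi
    have h1 : Qp j k (shiftPat j k d π p) i = (shiftPat j k d π p).2 ⟨i, hi⟩ := hq1' ⟨i, hi⟩
    have h2 : (shiftPat j k d π p).2 ⟨i, hi⟩ = Ψ (p.2 ⟨i, hi⟩) := rfl
    have h3 : (Ψ * Qp j k p) i = Ψ (Qp j k p i) := rfl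
    rw [h1, h2, h3, hq1 ⟨i, hi⟩]
  calc Rpat j k g h (shiftPat j k d π p)
      = g * ((Ψ * Qp j k p) * h * (Ψ * Qp j k p)⁻¹) := by rw [Rpat, hhconj]
  _ = (Ψ * g * Ψ⁻¹) * ((Ψ * Qp j k p) * h * (Ψ * Qp j k p)⁻¹) := by rw [← hgconj]
  _ = Ψ * (g * (Qp j k p * h * (Qp j k p)⁻¹)) * Ψ⁻¹ := by group
  _ = Ψ * Rpat j k g h p * Ψ⁻¹ := by rw [Rpat]

theorem clsOf_conj (m : ℕ) (R R' : Equiv.Perm ℕ) (hR : R ∈ Sset m) (hR' : R' ∈ Sset m)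
    (Ψ : Equiv.Perm ℕ) (hΨ : ∀ t, m ≤ t → Ψ t = t) (heq : R' = Ψ * R * Ψ⁻¹) :
    clsOf m R' hR' = clsOf m R hR := by
  have h1 : Quot.mk (conjRel m) ⟨R, hR⟩ = Quot.mk (conjRel m) ⟨R', hR'⟩ :=
    Quot.sound ⟨Ψ, hΨ, heq⟩
  exact congrArg (fun q => (⟨m, q⟩ : Cls)) h1.symm

def defaultCls : Cls := ⟨0, Quot.mk _ ⟨1, fun _ _ => rfl⟩⟩

def Zmap (x y : Cls) (p : ℕ × (Fin y.1 → ℕ)) : Cls :=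
  if hp : CovPat x.1 y.1 p then
    clsOf p.1 (Rpat x.1 y.1 (rep x) (rep y) p) (Rpat_mem (rep_mem x) (rep_mem y) hp)
  else defaultCls

theorem Zmap_eq {x y : Cls} {p : ℕ × (Fin y.1 → ℕ)} (hp : CovPat x.1 y.1 p) :
    Zmap x y p = clsOf p.1 (Rpat x.1 y.1 (rep x) (rep y) p)
      (Rpat_mem (rep_mem x) (rep_mem y) hp) := by
  rw [Zmap, dif_pos hp]

theorem Zmap_fst {x y : Cls} {p : ℕ × (Fin y.1 → ℕ)} (hp : CovPat x.1 y.1 p) :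
    (Zmap x y p).1 = p.1 := by
  rw [Zmap_eq hp]; rfl

theorem fact_dvd_card_filter (x y z : Cls) :
    Nat.factorial (z.1 - x.1) ∣
      ((Pats x.1 y.1).filter (fun p => Zmap x y p = z)).card := by
  classical
  set S := (Pats x.1 y.1).filter (fun p => Zmap x y p = z) with hSdef
  rcases S.eq_empty_or_nonempty with hemp | ⟨p₀, hp₀⟩
  · rw [hemp]; simp
  have hp₀' := Finset.mem_filter.mp hp₀
  have hcov₀ := mem_Pats_iff.mp hp₀'.1
  have hfst₀ : p₀.1 = z.1 := by
    rw [← hp₀'.2, Zmap_fst hcov₀]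
  have hjz : x.1 ≤ z.1 := by rw [← hfst₀]; exact hcov₀.1
  set d := z.1 - x.1 with hd
  have hzd : z.1 = x.1 + d := by omega
  have hcardG : Nat.factorial d = Fintype.card (Equiv.Perm (Fin d)) := by
    rw [Fintype.card_perm, Fintype.card_fin]
  -- every element of S has first component z.1
  have hfstS : ∀ p ∈ S, p.1 = z.1 := by
    intro p hp
    have hp' := Finset.mem_filter.mp hp
    have hcov := mem_Pats_iff.mp hp'.1
    rw [← hp'.2, Zmap_fst hcov]
  rw [hd, hcardG]
  apply card_dvd_of_free_action (fun π p => shiftPat x.1 y.1 d π p)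
  · intro p
    show shiftPat x.1 y.1 d 1 p = p
    rw [shiftPat, shiftPerm_one]
    exact Prod.ext rfl rfl
  · intro σ τ p
    show shiftPat _ _ _ σ (shiftPat _ _ _ τ p) = shiftPat _ _ _ (σ * τ) p
    rw [shiftPat, shiftPat, shiftPat]
    refine Prod.ext rfl ?_
    funext i
    exact shiftPerm_mul σ τ (p.2 i)
  · intro π p hp
    have hp' := Finset.mem_filter.mp hp
    have hcov := mem_Pats_iff.mp hp'.1
    have hpm : p.1 = x.1 + d := by rw [hfstS p hp, hzd]
    have hcov' := shiftPat_covpat hcov hpm π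
    rw [hSdef, Finset.mem_filter]
    refine ⟨mem_Pats_iff.mpr hcov', ?_⟩
    have hRconj := shiftPat_Rpat (rep_mem x) (rep_mem y) hcov hpm π
    have hfix : ∀ t, (shiftPat x.1 y.1 d π p).1 ≤ t → shiftPerm x.1 d π t = t := by
      intro t ht
      apply shiftPerm_big
      have : (shiftPat x.1 y.1 d π p).1 = p.1 := rfl
      omega
    rw [Zmap_eq hcov']
    have h1 : clsOf (shiftPat x.1 y.1 d π p).1
        (Rpat x.1 y.1 (rep x) (rep y) (shiftPat x.1 y.1 d π p))
        (Rpat_mem (rep_mem x) (rep_mem y) hcov')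
        = clsOf p.1 (Rpat x.1 y.1 (rep x) (rep y) p)
          (Rpat_mem (rep_mem x) (rep_mem y) hcov) := by
      apply clsOf_conj _ _ _ _ _ (shiftPerm x.1 d π) hfix hRconj
    rw [h1, ← Zmap_eq hcov]
    exact hp'.2
  · intro π p hp hfixp
    have hp' := Finset.mem_filter.mp hp
    have hcov := mem_Pats_iff.mp hp'.1
    have hpm : p.1 = x.1 + d := by rw [hfstS p hp, hzd]
    have hsnd := congrArg Prod.snd hfixp
    apply Equiv.ext
    intro b
    have hxb : x.1 ≤ x.1 + (b : ℕ) := by omega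
    have hxb2 : x.1 + (b : ℕ) < p.1 := by have := b.2; omega
    obtain ⟨i, hi⟩ := hcov.2.2.2 (x.1 + (b : ℕ)) hxb2 hxb
    have h2 : shiftPerm x.1 d π (p.2 i) = p.2 i := congrFun hsnd i
    rw [hi] at h2
    rw [shiftPerm_ge π hxb] at h2
    have h3 : x.1 + (b : ℕ) - x.1 = (b : ℕ) := by omega
    rw [h3] at h2
    have h4 : extN d π (b : ℕ) = (b : ℕ) := by omega
    rw [extN_apply_lt d π (b : ℕ) b.2] at h4
    apply Fin.ext
    rw [show ((⟨(b : ℕ), b.2⟩ : Fin d)) = b from Fin.ext rfl] at h4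
    exact_mod_cast h4
/-! ### The structure constants and the final assembly -/

def aCoef (x y z : Cls) : ℕ :=
  ((Pats x.1 y.1).filter (fun p => Zmap x y p = z)).card / Nat.factorial (z.1 - x.1)

theorem aCoef_mul (x y z : Cls) :
    Nat.factorial (z.1 - x.1) * aCoef x y z
      = ((Pats x.1 y.1).filter (fun p => Zmap x y p = z)).card :=
  Nat.mul_div_cancel' (fact_dvd_card_filter x y z)

theorem aCoef_mem_image {x y z : Cls} (hz : aCoef x y z ≠ 0) :
    z ∈ (Pats x.1 y.1).image (Zmap x y) := by
  have hcard : ((Pats x.1 y.1).filter (fun p => Zmap x y p = z)).card ≠ 0 := by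
    intro h0
    apply hz
    rw [aCoef, h0, Nat.zero_div]
  obtain ⟨p, hp⟩ := Finset.card_pos.mp (Nat.pos_of_ne_zero hcard)
  have hp' := Finset.mem_filter.mp hp
  rw [← hp'.2]
  exact Finset.mem_image_of_mem _ hp'.1

theorem aCoef_support_finite (x y : Cls) : (Function.support (aCoef x y)).Finite := by
  apply Set.Finite.subset ((Pats x.1 y.1).image (Zmap x y)).finite_toSet
  intro z hz
  exact aCoef_mem_image hz

theorem regrouped (N : ℕ) (x y : Cls) :
    AN N x.1 (rep x) * AN N y.1 (rep y)
      = ∑ᶠ z : Cls, (aCoef x y z : ℂ) • AN N z.1 (rep z) := by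
  classical
  rw [core_identity N x.1 y.1 (rep x) (rep y) (rep_mem x) (rep_mem y)]
  have hterm : ∀ p ∈ Pats x.1 y.1,
      ((Nat.factorial (p.1 - x.1) : ℂ))⁻¹ • AN N p.1 (Rpat x.1 y.1 (rep x) (rep y) p)
        = ((Nat.factorial ((Zmap x y p).1 - x.1) : ℂ))⁻¹ •
            AN N (Zmap x y p).1 (rep (Zmap x y p)) := by
    intro p hp
    have hcov := mem_Pats_iff.mp hp
    have hfst := Zmap_fst hcov
    have hAN : AN N (Zmap x y p).1 (rep (Zmap x y p))
        = AN N p.1 (Rpat x.1 y.1 (rep x) (rep y) p) := by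
      have h1 : Zmap x y p = clsOf p.1 (Rpat x.1 y.1 (rep x) (rep y) p)
          (Rpat_mem (rep_mem x) (rep_mem y) hcov) := Zmap_eq hcov
      calc AN N (Zmap x y p).1 (rep (Zmap x y p))
          = AN N p.1 (rep (clsOf p.1 (Rpat x.1 y.1 (rep x) (rep y) p)
            (Rpat_mem (rep_mem x) (rep_mem y) hcov))) := by rw [← h1, hfst]
      _ = AN N p.1 (Rpat x.1 y.1 (rep x) (rep y) p) := AN_rep N p.1 _ _
    rw [hAN, hfst]
  rw [Finset.sum_congr rfl hterm]
  rw [← Finset.sum_fiberwise_of_maps_to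
    (fun p hp => Finset.mem_image_of_mem (Zmap x y) hp)
    (fun p => ((Nat.factorial ((Zmap x y p).1 - x.1) : ℂ))⁻¹ •
      AN N (Zmap x y p).1 (rep (Zmap x y p)))]
  have hgroup : ∀ z ∈ (Pats x.1 y.1).image (Zmap x y),
      (∑ p ∈ (Pats x.1 y.1).filter (fun p => Zmap x y p = z),
        ((Nat.factorial ((Zmap x y p).1 - x.1) : ℂ))⁻¹ •
          AN N (Zmap x y p).1 (rep (Zmap x y p)))
      = (aCoef x y z : ℂ) • AN N z.1 (rep z) := by
    intro z hz
    have hconst : ∀ p ∈ (Pats x.1 y.1).filter (fun p => Zmap x y p = z),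
        ((Nat.factorial ((Zmap x y p).1 - x.1) : ℂ))⁻¹ •
          AN N (Zmap x y p).1 (rep (Zmap x y p))
        = ((Nat.factorial (z.1 - x.1) : ℂ))⁻¹ • AN N z.1 (rep z) := by
      intro p hp
      rw [(Finset.mem_filter.mp hp).2]
    rw [Finset.sum_congr rfl hconst, Finset.sum_const]
    rw [← Nat.cast_smul_eq_nsmul ℂ, smul_smul]
    congr 1
    rw [← aCoef_mul x y z]
    have hne : ((Nat.factorial (z.1 - x.1) : ℂ)) ≠ 0 := by
      exact_mod_cast Nat.factorial_ne_zero (z.1 - x.1)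
    push_cast
    field_simp
  rw [Finset.sum_congr rfl hgroup]
  symm
  apply finsum_eq_sum_of_support_subset
  intro z hz
  rw [Function.mem_support] at hz
  have : aCoef x y z ≠ 0 := by
    intro h0
    apply hz
    rw [h0]
    simp
  exact aCoef_mem_image this

/-- Stabilization of the structure constants of the algebras of conjugacy classes of the
symmetric groups (Ivanov–Kerov):  there is a family of non-negative integers
`a[(j, class of g), (k, class of h); (m, class of r)]`, finitely supported in the last
argument, such that `A_N[j,g] * A_N[k,h] = Σ a · A_N[m,r]` for every `N`. -/
theorem ivanov_kerov_stabilization :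
    ∃ a : Cls → Cls → Cls → ℕ,
      (∀ x y : Cls, (Function.support (a x y)).Finite) ∧
      (∀ (N j k : ℕ) (g h : Equiv.Perm ℕ) (hg : g ∈ Sset j) (hh : h ∈ Sset k),
        AN N j g * AN N k h
          = ∑ᶠ z : Cls, (a (clsOf j g hg) (clsOf k h hh) z : ℂ) • AN N z.1 (rep z)) := by
  refine ⟨aCoef, fun x y => aCoef_support_finite x y, ?_⟩
  intro N j k g h hg hh
  have hx : AN N j g = AN N j (rep (clsOf j g hg)) := (AN_rep N j g hg).symm
  have hy : AN N k h = AN N k (rep (clsOf k h hh)) := (AN_rep N k h hh).symm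
  rw [hx, hy]
  exact regrouped N (clsOf j g hg) (clsOf k h hh)

end
end

section
/- Let n, k, m ∈ ℕ with m ≤ n + k. Let σ, σ′ : {0,…,n−1} → {0,…,m−1} and τ, τ′ : {0,…,k−1} → {0,…,m−1} be injective maps such that the images of σ and τ together cover all of {0,…,m−1}, and likewise the images of σ′ and τ′ together cover all of {0,…,m−1}. Then there exists a permutation u of {0,…,m−1} with σ′ = u ∘ σ and τ′ = u ∘ τ if and only if for all i ∈ {0,…,k−1} and j ∈ {0,…,n−1} one has τ(i) = σ(j) ⟺ τ′(i) = σ′(j). -/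
/-! Pairing `σ` and `τ` into the surjection `Sum.elim σ τ`, the collision condition says exactly
that `Sum.elim σ τ` and `Sum.elim σ' τ'` identify the same points. A map through which
`Sum.elim σ' τ'` factors is then well defined and injective on `Fin m`, hence a permutation. -/

open Function

theorem Function.Surjective.exists_perm_comp_eq_iff {γ X : Type*} [Finite X] {g g' : γ → X}
    (hg : Surjective g) :
    (∃ u : Equiv.Perm X, g' = u ∘ g) ↔ ∀ a b, g a = g b ↔ g' a = g' b := by
  constructor
  · rintro ⟨u, rfl⟩ a b
    exact u.injective.eq_iff.symm
  · intro hker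
    have hfac : g'.FactorsThrough g := fun a b h => (hker a b).mp h
    have hf : extend g g' id ∘ g = g' := hfac.extend_comp id
    have hinj : Injective (extend g g' id) := hg.forall₂.mpr fun a b h =>
      (hker a b).mpr (congrFun hf a ▸ congrFun hf b ▸ h)
    exact ⟨.ofBijective _ (Finite.injective_iff_bijective.mp hinj), hf.symm⟩

theorem Sum.elim_eq_comp_elim_iff {α β X Y : Type*} {f : X → Y} {σ : α → X} {τ : β → X}
    {σ' : α → Y} {τ' : β → Y} :
    Sum.elim σ' τ' = f ∘ Sum.elim σ τ ↔ σ' = f ∘ σ ∧ τ' = f ∘ τ := by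
  rw [Sum.comp_elim]
  exact ⟨fun h => ⟨congrArg (· ∘ Sum.inl) h, congrArg (· ∘ Sum.inr) h⟩,
    fun ⟨h₁, h₂⟩ => h₁ ▸ h₂ ▸ rfl⟩

theorem Sum.elim_eq_elim_iff_iff_of_injective {α β X Y : Type*} {σ : α → X} {τ : β → X}
    {σ' : α → Y} {τ' : β → Y} (hσ : Injective σ) (hσ' : Injective σ') (hτ : Injective τ)
    (hτ' : Injective τ') :
    (∀ a b, Sum.elim σ τ a = Sum.elim σ τ b ↔ Sum.elim σ' τ' a = Sum.elim σ' τ' b) ↔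
      ∀ i j, τ i = σ j ↔ τ' i = σ' j := by
  simp only [Sum.forall, Sum.elim_inl, Sum.elim_inr, hσ.eq_iff, hσ'.eq_iff, hτ.eq_iff,
    hτ'.eq_iff, iff_self, implies_true, true_and, and_true]
  exact ⟨And.right, fun h => ⟨fun j i => by rw [eq_comm, h, eq_comm], h⟩⟩

theorem exists_perm_comp_iff_collision_pattern_eq_general
    (n k m : ℕ)
    (σ σ' : Fin n → Fin m) (τ τ' : Fin k → Fin m)
    (hσ : Function.Injective σ) (hσ' : Function.Injective σ')
    (hτ : Function.Injective τ) (hτ' : Function.Injective τ')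
    (hcov : ∀ x : Fin m, (∃ j, σ j = x) ∨ (∃ i, τ i = x)) :
    (∃ u : Equiv.Perm (Fin m), σ' = ⇑u ∘ σ ∧ τ' = ⇑u ∘ τ) ↔
      (∀ (i : Fin k) (j : Fin n), τ i = σ j ↔ τ' i = σ' j) := by
  have hsurj : Surjective (Sum.elim σ τ) := fun x => by
    rcases hcov x with ⟨j, rfl⟩ | ⟨i, rfl⟩
    exacts [⟨.inl j, rfl⟩, ⟨.inr i, rfl⟩]
  simp only [← Sum.elim_eq_comp_elim_iff]
  rw [hsurj.exists_perm_comp_eq_iff, Sum.elim_eq_elim_iff_iff_of_injective hσ hσ' hτ hτ']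

/-- Let `σ, σ′ : {0,…,n−1} → {0,…,m−1}` and `τ, τ′ : {0,…,k−1} → {0,…,m−1}` be injective,
with the images of `σ` and `τ` jointly covering `{0,…,m−1}`, and likewise for `σ′, τ′`
(so in particular `m ≤ n + k`).  Then there is a permutation `u` of `{0,…,m−1}` with
`σ′ = u ∘ σ` and `τ′ = u ∘ τ` if and only if for all `i, j` one has
`τ(i) = σ(j) ⟺ τ′(i) = σ′(j)`. -/
theorem exists_perm_comp_iff_collision_pattern_eq
    (n k m : ℕ) (hm : m ≤ n + k)
    (σ σ' : Fin n → Fin m) (τ τ' : Fin k → Fin m)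
    (hσ : Function.Injective σ) (hσ' : Function.Injective σ')
    (hτ : Function.Injective τ) (hτ' : Function.Injective τ')
    (hcov : ∀ x : Fin m, (∃ j, σ j = x) ∨ (∃ i, τ i = x))
    (hcov' : ∀ x : Fin m, (∃ j, σ' j = x) ∨ (∃ i, τ' i = x)) :
    (∃ u : Equiv.Perm (Fin m), σ' = ⇑u ∘ σ ∧ τ' = ⇑u ∘ τ) ↔
      (∀ (i : Fin k) (j : Fin n), τ i = σ j ↔ τ' i = σ' j) :=
  exists_perm_comp_iff_collision_pattern_eq_general n k m σ σ' τ τ' hσ hσ' hτ hτ' hcov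
end
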